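/- Let R be a commutative ring, E an R-module, ρ: E → Der(R) an R-linear map into derivations of R, and [·,·]: E × E → E an R-bilinear-in-nothing (just additive/skew) antisymmetric bracket satisfying the Leibniz rule [e, f e'] = f[e,e'] + ρ(e)(f) e' for all e,e' ∈ E, f ∈ R. Define λ(e,e')(f) := ρ([e,e'])(f) - [ρ(e),ρ(e')](f) and the Jacobiator J(e,e',e'') := [[e,e'],e''] - [[e,e''],e'] + [[e',e''],e]. Then J(e, e', f e'') - f J(e, e', e'') = λ(e,e')(f) e''. In particular, if J = 0 then λ = 0, i.e. ρ is a bracket homomorphism. -/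

import Mathlib

/-! Expanding the three Leibniz rules in `J(e, e', f e'')`, every term in which `ρ` hits `f`
only once cancels in pairs by skew-symmetry; what survives is
`ρ([e,e']) f - ρ(e) (ρ(e') f) + ρ(e') (ρ(e) f)` times `e''`. -/

section PreLieAlgebroid

variable {R E : Type*} [CommRing R] [AddCommGroup E] [Module R E]
  {ρ : E → R → R} {br : E → E → E}

theorem bracket_smul_left (hskew : ∀ e e' : E, br e e' = - br e' e)
    (hLeib : ∀ (e e' : E) (f : R), br e (f • e') = f • br e e' + ρ e f • e')
    (f : R) (e e' : E) : br (f • e) e' = f • br e e' - ρ e' f • e := by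
  rw [hskew, hLeib, hskew e' e]
  module

theorem bracket_bracket_smul_left
    (hbadd₁ : ∀ e₁ e₂ e₃ : E, br (e₁ + e₂) e₃ = br e₁ e₃ + br e₂ e₃)
    (hskew : ∀ e e' : E, br e e' = - br e' e)
    (hLeib : ∀ (e e' : E) (f : R), br e (f • e') = f • br e e' + ρ e f • e')
    (f : R) (e e' e'' : E) :
    br (br e (f • e'')) e' = f • br (br e e'') e' - ρ e' f • br e e''
      - ρ e f • br e' e'' - ρ e' (ρ e f) • e'' := by
  rw [hLeib, hbadd₁, bracket_smul_left hskew hLeib, bracket_smul_left hskew hLeib,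
    hskew e'' e']
  module

end PreLieAlgebroid

theorem stmt6_general {R : Type*} [CommRing R] {E : Type*} [AddCommGroup E] [Module R E]
    (ρ : E → R → R)
    (br : E → E → E)
    (hbadd₁ : ∀ e₁ e₂ e₃ : E, br (e₁ + e₂) e₃ = br e₁ e₃ + br e₂ e₃)
    (hskew : ∀ e e' : E, br e e' = - br e' e)
    (hLeib : ∀ (e e' : E) (f : R), br e (f • e') = f • br e e' + ρ e f • e') :
    ∀ (e e' e'' : E) (f : R),
      (br (br e e') (f • e'') - br (br e (f • e'')) e' + br (br e' (f • e'')) e)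
        - f • (br (br e e') e'' - br (br e e'') e' + br (br e' e'') e)
      = (ρ (br e e') f - (ρ e (ρ e' f) - ρ e' (ρ e f))) • e'' := by
  intro e e' e'' f
  rw [hLeib, bracket_bracket_smul_left hbadd₁ hskew hLeib,
    bracket_bracket_smul_left hbadd₁ hskew hLeib]
  module

/-- For a pre-Lie-algebroid structure (anchor `ρ`, skew bracket with Leibniz
rule), the Jacobiator satisfies
`J(e,e',f e'') - f J(e,e',e'') = λ(e,e')(f) e''` where
`λ(e,e') = ρ([e,e']) - [ρ(e),ρ(e')]`. -/
theorem stmt6 {R : Type*} [CommRing R] {E : Type*} [AddCommGroup E] [Module R E]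
    (ρ : E → R → R)
    (hρaddE : ∀ (e e' : E) (f : R), ρ (e + e') f = ρ e f + ρ e' f)
    (hρlin : ∀ (f : R) (e : E) (g : R), ρ (f • e) g = f * ρ e g)
    (hρadd : ∀ (e : E) (f g : R), ρ e (f + g) = ρ e f + ρ e g)
    (hρder : ∀ (e : E) (f g : R), ρ e (f * g) = ρ e f * g + f * ρ e g)
    (br : E → E → E)
    (hbadd₁ : ∀ e₁ e₂ e₃ : E, br (e₁ + e₂) e₃ = br e₁ e₃ + br e₂ e₃)
    (hbadd₂ : ∀ e₁ e₂ e₃ : E, br e₁ (e₂ + e₃) = br e₁ e₂ + br e₁ e₃)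
    (hskew : ∀ e e' : E, br e e' = - br e' e)
    (hLeib : ∀ (e e' : E) (f : R), br e (f • e') = f • br e e' + ρ e f • e') :
    ∀ (e e' e'' : E) (f : R),
      (br (br e e') (f • e'') - br (br e (f • e'')) e' + br (br e' (f • e'')) e)
        - f • (br (br e e') e'' - br (br e e'') e' + br (br e' e'') e)
      = (ρ (br e e') f - (ρ e (ρ e' f) - ρ e' (ρ e f))) • e'' :=
  stmt6_general ρ br hbadd₁ hskew hLeib
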